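/- For every positive integer m, the 4-coloring of [8m+2] obtained by repeating the block ABCC m times, then the block DDAB m times, then the two elements colored D, B, contains no rainbow 4-term arithmetic progression. -/
import Mathlib


inductive Color | A | B | C | D
  deriving DecidableEq

open Color

/-- A coloring `c` of `{1,...,n}` contains a rainbow 4-term AP. -/
def RainbowAP4 (n : ℕ) (c : ℕ → Color) : Prop :=
  ∃ t d : ℕ, 1 ≤ t ∧ 1 ≤ d ∧ t + 3*d ≤ n ∧
    c t ≠ c (t+d) ∧ c t ≠ c (t+2*d) ∧ c t ≠ c (t+3*d) ∧
    c (t+d) ≠ c (t+2*d) ∧ c (t+d) ≠ c (t+3*d) ∧ c (t+2*d) ≠ c (t+3*d)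

/-- The coloring for STATEMENT 2. -/
def col (m i : ℕ) : Color :=
  if i ≤ 4*m then (if i % 4 = 1 then A else if i % 4 = 2 then B else C) else if i ≤ 8*m then (if i % 4 = 1 ∨ i % 4 = 2 then D else if i % 4 = 3 then A else B) else if i = 8*m+1 then D else B

def enc : Color → ℕ
  | A => 0 | B => 1 | C => 2 | D => 3

lemma enc_inj : ∀ x y : Color, enc x = enc y → x = y := by
  intro x y h
  cases x <;> cases y <;> first | rfl | simp [enc] at h

lemma col_enc (m i : ℕ) (h : i ≤ 8*m+2) :
    (enc (col m i) = 0 ∧ ((i ≤ 4*m ∧ i % 4 = 1) ∨ (4*m < i ∧ i ≤ 8*m ∧ i % 4 = 3))) ∨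
    (enc (col m i) = 1 ∧ ((i ≤ 4*m ∧ i % 4 = 2) ∨ (4*m < i ∧ i ≤ 8*m ∧ i % 4 = 0) ∨ i = 8*m+2)) ∨
    (enc (col m i) = 2 ∧ (i ≤ 4*m ∧ (i % 4 = 3 ∨ i % 4 = 0))) ∨
    (enc (col m i) = 3 ∧ (4*m < i ∧ i ≤ 8*m+1 ∧ (i % 4 = 1 ∨ i % 4 = 2))) := by
  unfold col
  split_ifs <;> simp [enc] <;> omega

theorem stmt_2 (m : ℕ) (hm : 0 < m) :
    ¬ RainbowAP4 (8*m+2) (col m) := by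
  rintro ⟨t, d, ht, hd, hle, h12, h13, h14, h23, h24, h34⟩
  have P1 := col_enc m t (by omega)
  have P2 := col_enc m (t+d) (by omega)
  have P3 := col_enc m (t+2*d) (by omega)
  have P4 := col_enc m (t+3*d) (by omega)
  have e12 : enc (col m t) ≠ enc (col m (t+d)) := fun h => h12 (enc_inj _ _ h)
  have e13 : enc (col m t) ≠ enc (col m (t+2*d)) := fun h => h13 (enc_inj _ _ h)
  have e14 : enc (col m t) ≠ enc (col m (t+3*d)) := fun h => h14 (enc_inj _ _ h)
  have e23 : enc (col m (t+d)) ≠ enc (col m (t+2*d)) := fun h => h23 (enc_inj _ _ h)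
  have e24 : enc (col m (t+d)) ≠ enc (col m (t+3*d)) := fun h => h24 (enc_inj _ _ h)
  have e34 : enc (col m (t+2*d)) ≠ enc (col m (t+3*d)) := fun h => h34 (enc_inj _ _ h)
  omega
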